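/- arXiv:1210.0592 — 6 statements merged into one kernel-verified Lean document; each statement's English description precedes it below -/
import Mathlib

section
/- Let Q1 and Q2 be closed axis-parallel cubes in R^n with Q1 ∩ Q2 ≠ ∅. Then the set Q1 ∩ (2Q2) (where 2Q2 denotes the dilation of Q2 about its center by factor 2) contains a cube Q̃ with diam Q̃ ≥ (1/2) min{diam Q1, diam Q2}. -/
open Metric

/-- If two closed axis-parallel cubes `Q₁ = Q(x₁,r₁)` and `Q₂ = Q(x₂,r₂)` in `ℝⁿ`
(sup-norm closed balls) intersect, then `Q₁ ∩ 2Q₂` contains a cube `Q̃` with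
`diam Q̃ ≥ (1/2) min (diam Q₁) (diam Q₂)` (diameters in the sup-norm, so `diam Q(x,r) = 2r`). -/
theorem stmt0 (n : ℕ) (x₁ x₂ : Fin n → ℝ) (r₁ r₂ : ℝ) (h₁ : 0 < r₁) (h₂ : 0 < r₂)
    (h : (closedBall x₁ r₁ ∩ closedBall x₂ r₂).Nonempty) :
    ∃ (c : Fin n → ℝ) (r : ℝ), 0 < r ∧
      closedBall c r ⊆ closedBall x₁ r₁ ∩ closedBall x₂ (2 * r₂) ∧
      (1 / 2) * min (2 * r₁) (2 * r₂) ≤ 2 * r := by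
  obtain ⟨y, hy1, hy2⟩ := h
  set r : ℝ := min r₁ r₂ / 2 with hr_def
  have hr_pos : 0 < r := by positivity
  have hr1 : r ≤ r₁ / 2 := by
    apply div_le_div_of_nonneg_right (min_le_left _ _) (by norm_num)
  have hr2 : r ≤ r₂ / 2 := by
    apply div_le_div_of_nonneg_right (min_le_right _ _) (by norm_num)
  set t : ℝ := r / r₁ with ht_def
  have ht0 : 0 ≤ t := by positivity
  have ht1 : t ≤ 1 := by
    rw [ht_def, div_le_one h₁]; linarith
  set c : Fin n → ℝ := y + t • (x₁ - y) with hc_def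
  have hdy1 : dist y x₁ ≤ r₁ := mem_closedBall.mp hy1
  have hdy2 : dist y x₂ ≤ r₂ := mem_closedBall.mp hy2
  have hcx₁ : dist c x₁ ≤ r₁ - r := by
    have : c - x₁ = (1 - t) • (y - x₁) := by
      rw [hc_def]; module
    rw [dist_eq_norm, this, norm_smul, Real.norm_eq_abs, abs_of_nonneg (by linarith)]
    calc (1 - t) * ‖y - x₁‖ ≤ (1 - t) * r₁ := by
          apply mul_le_mul_of_nonneg_left _ (by linarith)
          rw [← dist_eq_norm]; exact hdy1
      _ = r₁ - t * r₁ := by ring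
      _ = r₁ - r := by rw [ht_def, div_mul_cancel₀ _ h₁.ne']
  have hcy : dist c y ≤ r := by
    have : c - y = t • (x₁ - y) := by rw [hc_def]; abel
    rw [dist_eq_norm, this, norm_smul, Real.norm_eq_abs, abs_of_nonneg ht0]
    calc t * ‖x₁ - y‖ ≤ t * r₁ := by
          apply mul_le_mul_of_nonneg_left _ ht0
          rw [← dist_eq_norm, dist_comm]; exact hdy1
      _ = r := by rw [ht_def, div_mul_cancel₀ _ h₁.ne']
  have hcx₂ : dist c x₂ ≤ 2 * r₂ - r := by
    calc dist c x₂ ≤ dist c y + dist y x₂ := dist_triangle _ _ _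
      _ ≤ r + r₂ := by linarith
      _ ≤ 2 * r₂ - r := by linarith
  have hmin : min (2 * r₁) (2 * r₂) = 2 * min r₁ r₂ := by
    rcases le_total r₁ r₂ with hle | hle
    · rw [min_eq_left hle, min_eq_left (by linarith)]
    · rw [min_eq_right hle, min_eq_right (by linarith)]
  refine ⟨c, r, hr_pos, ?_, by rw [hr_def, hmin]; ring_nf; rfl⟩
  apply Set.subset_inter
  · exact closedBall_subset_closedBall' (by linarith)
  · exact closedBall_subset_closedBall' (by linarith)
end

section
/- Let p > n and let μ be a nontrivial nonnegative Borel measure on R^n. Define R(x) as the unique positive number such that μ(Q(x,r)) > R(x)^(n-p) for r > R(x) and μ(Q(x,r)) < R(x)^(n-p) for r < R(x). Then R is a Lipschitz function on R^n with Lipschitz constant 1 (with respect to the sup-norm): |R(x) - R(y)| ≤ ‖x - y‖ for all x, y ∈ R^n. -/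
open Metric MeasureTheory

lemma stmt2_aux (n : ℕ) (p : ℝ) (hp : (n : ℝ) < p) (μ : Measure (Fin n → ℝ))
    (R : (Fin n → ℝ) → ℝ)
    (hR : ∀ x : Fin n → ℝ, 0 < R x ∧
      (∀ r : ℝ, R x < r → ENNReal.ofReal (R x ^ ((n : ℝ) - p)) < μ (closedBall x r)) ∧
      (∀ r : ℝ, 0 < r → r < R x →
        μ (closedBall x r) < ENNReal.ofReal (R x ^ ((n : ℝ) - p))))
    (x y : Fin n → ℝ) :
    R x - R y ≤ ‖x - y‖ := by
  by_contra h
  push_neg at h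
  set d : ℝ := ‖x - y‖ with hd
  have hd0 : 0 ≤ d := norm_nonneg _
  obtain ⟨hRy, hylt, -⟩ := hR y
  obtain ⟨hRx, -, hxgt⟩ := hR x
  have hlt : R y + d < R x := by linarith
  set r : ℝ := (R y + (R x - d)) / 2 with hr
  have h1 : R y < r := by rw [hr]; linarith
  have h2 : r + d < R x := by rw [hr]; linarith
  have hr0 : 0 < r := lt_trans hRy h1
  have hsub : closedBall y r ⊆ closedBall x (r + d) := by
    apply closedBall_subset_closedBall'
    have : dist y x = d := by rw [dist_eq_norm, ← norm_neg]; simp [hd]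
    linarith [this.le]
  have hmono : μ (closedBall y r) ≤ μ (closedBall x (r + d)) := measure_mono hsub
  have hA : ENNReal.ofReal (R y ^ ((n : ℝ) - p)) < μ (closedBall y r) := hylt r h1
  have hB : μ (closedBall x (r + d)) < ENNReal.ofReal (R x ^ ((n : ℝ) - p)) :=
    hxgt (r + d) (by linarith) h2
  have hchain : ENNReal.ofReal (R y ^ ((n : ℝ) - p)) < ENNReal.ofReal (R x ^ ((n : ℝ) - p)) :=
    (hA.trans_le hmono).trans hB
  have hreal : R y ^ ((n : ℝ) - p) < R x ^ ((n : ℝ) - p) :=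
    (ENNReal.ofReal_lt_ofReal_iff (Real.rpow_pos_of_pos hRx _)).mp hchain
  have hxy : R y < R x := by linarith
  have hanti : R x ^ ((n : ℝ) - p) < R y ^ ((n : ℝ) - p) :=
    Real.rpow_lt_rpow_of_neg hRy hxy (by linarith)
  linarith

/-- With `R(x)` defined by the conditions `μ(Q(x,r)) > R(x)^(n-p)` for `r > R(x)` and
`μ(Q(x,r)) < R(x)^(n-p)` for `0 < r < R(x)`, the function `R` is 1-Lipschitz with respect
to the sup-norm on `ℝⁿ`: `|R(x) - R(y)| ≤ ‖x - y‖`. -/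
theorem stmt2 (n : ℕ) (p : ℝ) (hp : (n : ℝ) < p) (μ : Measure (Fin n → ℝ)) (hμ : μ ≠ 0)
    (R : (Fin n → ℝ) → ℝ)
    (hR : ∀ x : Fin n → ℝ, 0 < R x ∧
      (∀ r : ℝ, R x < r → ENNReal.ofReal (R x ^ ((n : ℝ) - p)) < μ (closedBall x r)) ∧
      (∀ r : ℝ, 0 < r → r < R x →
        μ (closedBall x r) < ENNReal.ofReal (R x ^ ((n : ℝ) - p))))
    (x y : Fin n → ℝ) :
    |R x - R y| ≤ ‖x - y‖ := by
  rw [abs_sub_le_iff]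
  refine ⟨stmt2_aux n p hp μ R hR x y, ?_⟩
  have := stmt2_aux n p hp μ R hR y x
  rwa [show ‖y - x‖ = ‖x - y‖ from norm_sub_rev y x] at this
end

section
/- Let w : R^n → (0, ∞) satisfy liminf_{y → x} w(y) > 0 for every x ∈ R^n. Then there exists a nonempty set S ⊂ R^n such that: (i) for every x ∈ R^n there exists x̃ ∈ S with ‖x - x̃‖ + w(x̃) ≤ 83 w(x); and (ii) for every distinct z1, z2 ∈ S, w(z1) + w(z2) ≤ ‖z1 - z2‖/6. -/
open Metric

/-- Theorem (measure concentration set): if `w : ℝⁿ → (0,∞)` satisfies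
`liminf_{y → x} w(y) > 0` at every point `x`, then there is a nonempty set `S ⊆ ℝⁿ`
such that (i) every `x ∈ ℝⁿ` admits `x̃ ∈ S` with `‖x - x̃‖ + w(x̃) ≤ 83 w(x)`, and
(ii) distinct `z₁, z₂ ∈ S` satisfy `w(z₁) + w(z₂) ≤ ‖z₁ - z₂‖ / 6`.
(Norms are sup-norms.) -/
theorem stmt4 (n : ℕ) (w : (Fin n → ℝ) → ℝ) (hw : ∀ x, 0 < w x)
    (hlim : ∀ x : Fin n → ℝ, ∃ ε > (0 : ℝ), ∃ δ > (0 : ℝ),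
      ∀ y : Fin n → ℝ, ‖y - x‖ < δ → ε ≤ w y) :
    ∃ S : Set (Fin n → ℝ), S.Nonempty ∧
      (∀ x : Fin n → ℝ, ∃ x' ∈ S, ‖x - x'‖ + w x' ≤ 83 * w x) ∧
      (∀ z₁ ∈ S, ∀ z₂ ∈ S, z₁ ≠ z₂ → w z₁ + w z₂ ≤ ‖z₁ - z₂‖ / 6) := by
  classical
  -- good points: locally near-minimal for w
  set G : Set (Fin n → ℝ) :=
    {p | ∀ y, ‖y - p‖ ≤ 6 * (w p + w y) → w p / 2 < w y} with hGdef
  -- Claim A: every x has a good point nearby with smaller w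
  have key : ∀ x : Fin n → ℝ, ∃ p ∈ G, ‖x - p‖ ≤ 18 * w x ∧ w p ≤ w x := by
    intro x
    by_contra hcon
    push_neg at hcon
    set A : Set (Fin n → ℝ) :=
      {p | w p ≤ w x ∧ ‖x - p‖ ≤ 18 * (w x - w p)} with hAdef
    have hxA : x ∈ A := ⟨le_refl _, by simp⟩
    have step : ∀ p ∈ A, ∃ y ∈ A, w y ≤ w p / 2 := by
      intro p hp
      have hpG : p ∉ G := by
        intro hpg
        have h2 : ‖x - p‖ ≤ 18 * w x := le_trans hp.2 (by nlinarith [hw p])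
        exact absurd hp.1 (not_le.2 (hcon p hpg h2))
      simp only [hGdef, Set.mem_setOf_eq, not_forall, not_lt] at hpG
      obtain ⟨y, hy1, hy2⟩ := hpG
      have h3 : ‖x - y‖ ≤ ‖x - p‖ + ‖p - y‖ := by
        have h := norm_add_le (x - p) (p - y)
        rw [sub_add_sub_cancel] at h
        exact h
      rw [norm_sub_rev p y] at h3
      refine ⟨y, ⟨?_, ?_⟩, hy2⟩
      · have := hp.1; have := hw p; linarith
      · have := hp.2; linarith
    have step' : ∀ p : A, ∃ y : A, w ↑y ≤ w ↑p / 2 := by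
      rintro ⟨p, hp⟩
      obtain ⟨y, hyA, hy⟩ := step p hp
      exact ⟨⟨y, hyA⟩, hy⟩
    choose f hf using step'
    let seq : ℕ → A := fun k => f^[k] ⟨x, hxA⟩
    have hseq : ∀ k, w ↑(seq k) ≤ w x / 2 ^ k := by
      intro k
      induction k with
      | zero => simp [seq]
      | succ k ih =>
        have hs : seq (k + 1) = f (seq k) := Function.iterate_succ_apply' f k _
        rw [hs]
        calc w ↑(f (seq k)) ≤ w ↑(seq k) / 2 := hf _
          _ ≤ (w x / 2 ^ k) / 2 := by linarith
          _ = w x / 2 ^ (k + 1) := by ring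
    have hball : ∀ k, (seq k : Fin n → ℝ) ∈ closedBall x (18 * w x) := by
      intro k
      have h1 := (seq k).2.1
      have h2 := (seq k).2.2
      have hle : ‖(seq k : Fin n → ℝ) - x‖ ≤ 18 * w x := by
        rw [norm_sub_rev]; nlinarith [hw (seq k : Fin n → ℝ)]
      simpa [mem_closedBall, dist_eq_norm] using hle
    obtain ⟨x₀, -, φ, hφ, hconv⟩ :=
      (isCompact_closedBall x (18 * w x)).tendsto_subseq hball
    obtain ⟨ε, hε, δ, hδ, hεδ⟩ := hlim x₀
    obtain ⟨N, hN⟩ := Metric.tendsto_atTop.mp hconv δ hδ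
    obtain ⟨K, hK⟩ : ∃ K : ℕ, w x / ε < 2 ^ K := pow_unbounded_of_one_lt _ (by norm_num)
    set k := max N K with hk
    have hdist : dist ((fun j => (seq j : Fin n → ℝ)) (φ k)) x₀ < δ := hN k (le_max_left _ _)
    rw [dist_eq_norm] at hdist
    have hεle : ε ≤ w ↑(seq (φ k)) := hεδ _ hdist
    have hφk : K ≤ φ k := le_trans (le_max_right N K) (hφ.le_apply)
    have h2le : (2 : ℝ) ^ K ≤ 2 ^ (φ k) := by
      apply pow_le_pow_right₀ (by norm_num) hφk
    have : w ↑(seq (φ k)) < ε := by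
      have hp : (0 : ℝ) < 2 ^ K := by positivity
      have hq : (0 : ℝ) < 2 ^ (φ k) := by positivity
      calc w ↑(seq (φ k)) ≤ w x / 2 ^ (φ k) := hseq _
        _ ≤ w x / 2 ^ K := by
            apply div_le_div_of_nonneg_left (le_of_lt (hw x)) hp h2le
        _ < ε := by
            rw [div_lt_iff₀ hp]
            nlinarith [(div_lt_iff₀ hε).mp hK]
    linarith
  -- Zorn: maximal separated subset of G
  set P : Set (Set (Fin n → ℝ)) :=
    {T | T ⊆ G ∧ ∀ z₁ ∈ T, ∀ z₂ ∈ T, z₁ ≠ z₂ → 6 * (w z₁ + w z₂) ≤ ‖z₁ - z₂‖} with hPdef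
  obtain ⟨S, hSmax⟩ := zorn_subset P (by
    intro c hc hchain
    refine ⟨⋃₀ c, ⟨?_, ?_⟩, fun s hs => Set.subset_sUnion_of_mem hs⟩
    · rintro z ⟨t, ht, hzt⟩
      exact (hc ht).1 hzt
    · rintro z₁ ⟨t₁, ht₁, hz₁⟩ z₂ ⟨t₂, ht₂, hz₂⟩ hne
      rcases eq_or_ne t₁ t₂ with rfl | htne
      · exact (hc ht₁).2 z₁ hz₁ z₂ hz₂ hne
      · rcases hchain ht₁ ht₂ htne with h | h
        · exact (hc ht₂).2 z₁ (h hz₁) z₂ hz₂ hne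
        · exact (hc ht₁).2 z₁ hz₁ z₂ (h hz₂) hne)
  have hSP : S ∈ P := hSmax.1
  have cover : ∀ x : Fin n → ℝ, ∃ x' ∈ S, ‖x - x'‖ + w x' ≤ 83 * w x := by
    intro x
    obtain ⟨p, hpG, hp1, hp2⟩ := key x
    by_cases hpS : p ∈ S
    · exact ⟨p, hpS, by nlinarith [hw x]⟩
    · have hz : ∃ z ∈ S, ‖p - z‖ < 6 * (w p + w z) := by
        by_contra hno
        push_neg at hno
        have hins : insert p S ∈ P := by
          constructor
          · exact Set.insert_subset hpG hSP.1
          · rintro z₁ (rfl | hz₁) z₂ (rfl | hz₂) hne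
            · exact absurd rfl hne
            · exact hno z₂ hz₂
            · rw [norm_sub_rev]
              have := hno z₁ hz₁
              linarith
            · exact hSP.2 z₁ hz₁ z₂ hz₂ hne
        have := hSmax.2 hins (Set.subset_insert p S)
        exact hpS (this (Set.mem_insert p S))
      obtain ⟨z, hzS, hzd⟩ := hz
      have hzG : z ∈ G := hSP.1 hzS
      have hwz : w z / 2 < w p := by
        apply hzG p
        linarith
      have h4 : ‖x - z‖ ≤ ‖x - p‖ + ‖p - z‖ := by
        have h := norm_add_le (x - p) (p - z)
        rw [sub_add_sub_cancel] at h
        exact h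
      exact ⟨z, hzS, by linarith [hw x]⟩
  obtain ⟨x', hx'S, -⟩ := cover 0
  refine ⟨S, ⟨x', hx'S⟩, cover, fun z₁ h₁ z₂ h₂ hne => ?_⟩
  have := hSP.2 z₁ h₁ z₂ h₂ hne
  linarith
end

section
/- Let E ⊂ R^n and R : E → (0,∞) satisfy 6(R(x)+R(y)) ≤ ‖x-y‖ for all distinct x,y ∈ E. Let τ ≥ 1, let x, x' ∈ E be distinct, and let Q, Q' be cubes with x ∈ τQ, x' ∈ τQ', and Q ∩ Q' ≠ ∅. Then diam K^(x) + diam K^(x') ≤ τ (diam Q + diam Q'), where K^(x) = Q(x, R(x)). -/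
open Metric

/-- If `6(R(x) + R(y)) ≤ ‖x - y‖` for all distinct `x, y ∈ E`, `τ ≥ 1`, and `Q = Q(y,r)`,
`Q' = Q(y',r')` are cubes with `x ∈ τQ`, `x' ∈ τQ'` for distinct `x, x' ∈ E` and
`Q ∩ Q' ≠ ∅`, then `diam K^(x) + diam K^(x') ≤ τ (diam Q + diam Q')`, where
`K^(x) = Q(x, R(x))` (sup-norm cubes, `diam Q(x,r) = 2r`). -/
theorem stmt7 (n : ℕ) (E : Set (Fin n → ℝ)) (R : (Fin n → ℝ) → ℝ)
    (hR : ∀ x ∈ E, 0 < R x)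
    (hsep : ∀ x ∈ E, ∀ y ∈ E, x ≠ y → 6 * (R x + R y) ≤ ‖x - y‖)
    (τ : ℝ) (hτ : 1 ≤ τ)
    (x x' : Fin n → ℝ) (hx : x ∈ E) (hx' : x' ∈ E) (hne : x ≠ x')
    (y y' : Fin n → ℝ) (r r' : ℝ) (hr : 0 < r) (hr' : 0 < r')
    (hxQ : x ∈ closedBall y (τ * r)) (hx'Q' : x' ∈ closedBall y' (τ * r'))
    (hQQ' : (closedBall y r ∩ closedBall y' r').Nonempty) :
    2 * R x + 2 * R x' ≤ τ * (2 * r + 2 * r') := by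
  obtain ⟨z, hz, hz'⟩ := hQQ'
  rw [mem_closedBall] at hxQ hx'Q' hz hz'
  have hsep' := hsep x hx x' hx' hne
  rw [← dist_eq_norm] at hsep'
  have hchain : dist x x' ≤ τ * r + r + r' + τ * r' := by
    calc dist x x' ≤ dist x y + dist y z + dist z y' + dist y' x' :=
          dist_triangle4 x y y' x' |>.trans (by
            have := dist_triangle y z y'
            linarith [dist_triangle y z y'])
      _ ≤ τ * r + r + r' + τ * r' := by
          rw [dist_comm y z, dist_comm y' x']
          linarith
  have h1 : r + r' ≤ τ * (r + r') := le_mul_of_one_le_left (by linarith) hτ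
  nlinarith [hR x hx, hR x' hx']
end

section
/- Let p > n, let μ be a nontrivial nonnegative Borel measure on R^n, R(x) defined as the unique positive number with μ(Q(x,r)) > R(x)^(n-p) for r > R(x) and μ(Q(x,r)) < R(x)^(n-p) for r < R(x), and let E ⊂ R^n be a set such that for every x ∈ R^n there is x̃ ∈ E with ‖x - x̃‖ ≤ 83 R(x). Then for every cube Q ⊂ R^n and every θ > 0 with diam Q ≤ θ · dist(Q, E), one has μ(Q) ≤ 42^p (1+θ)^p r_Q^{n-p}, where r_Q is half the side length of Q. -/
open Metric MeasureTheory

/-- Distance between two subsets of a pseudometric space. -/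
noncomputable def setDist {X : Type*} [PseudoMetricSpace X] (s t : Set X) : ℝ :=
  sInf {d : ℝ | ∃ u ∈ s, ∃ v ∈ t, d = dist u v}

private lemma grid_aux (r : ℝ) (hr : 0 < r) (N : ℕ) (hN : 0 < N) (t : ℝ)
    (ht0 : 0 ≤ t) (ht2 : t ≤ 2 * r) :
    |t - (2 * (min ⌊t * N / (2 * r)⌋₊ (N - 1) : ℕ) + 1) * r / N| ≤ r / N := by
  have hNR : (0:ℝ) < N := by exact_mod_cast hN
  have h2r : (0:ℝ) < 2 * r := by linarith
  set j : ℕ := min ⌊t * N / (2 * r)⌋₊ (N - 1) with hj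
  have hfl : (j:ℝ) ≤ t * N / (2 * r) := by
    have h1 : (j:ℕ) ≤ ⌊t * N / (2 * r)⌋₊ := min_le_left _ _
    have h2 : (⌊t * N / (2 * r)⌋₊ : ℝ) ≤ t * N / (2 * r) :=
      Nat.floor_le (by positivity)
    exact le_trans (by exact_mod_cast h1) h2
  have hlow : 2 * (j:ℝ) * r ≤ t * N := by
    have := (le_div_iff₀ h2r).mp hfl
    nlinarith
  have hupp : t * N ≤ (2 * (j:ℝ) + 2) * r := by
    rcases le_or_gt ⌊t * N / (2 * r)⌋₊ (N - 1) with h | h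
    · have hje : j = ⌊t * N / (2 * r)⌋₊ := min_eq_left h
      have h3 : t * N / (2 * r) < (j : ℝ) + 1 := by
        rw [hje]; exact Nat.lt_floor_add_one _
      have := (div_lt_iff₀ h2r).mp h3
      nlinarith
    · have hje : j = N - 1 := min_eq_right (le_of_lt h)
      have hjN : (j : ℝ) + 1 = (N : ℝ) := by
        rw [hje]
        have : (N - 1 : ℕ) + 1 = N := Nat.succ_pred_eq_of_pos hN
        exact_mod_cast congrArg (Nat.cast : ℕ → ℝ) this
      nlinarith
  have heq : t - (2 * (j:ℝ) + 1) * r / N = (t * N - (2 * (j:ℝ) + 1) * r) / N := by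
    field_simp
  rw [heq, abs_div, abs_of_pos hNR]
  gcongr
  rw [abs_le]
  constructor <;> nlinarith

/-- Let `p > n`, `μ` a nontrivial Borel measure on `ℝⁿ`, `R(x)` the unique positive number with
`μ(Q(x,r)) > R(x)^(n-p)` for `r > R(x)` and `μ(Q(x,r)) < R(x)^(n-p)` for `0 < r < R(x)`,
and let `E ⊆ ℝⁿ` satisfy: every `x` has `x̃ ∈ E` with `‖x - x̃‖ ≤ 83 R(x)`. Then for every
cube `Q = Q(c,r)` and every `θ > 0` with `diam Q ≤ θ · dist(Q,E)` one has
`μ(Q) ≤ 42^p (1+θ)^p r^(n-p)` (sup-norm cubes, `diam Q = 2r`). -/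
theorem stmt8 (n : ℕ) (p : ℝ) (hp : (n : ℝ) < p) (μ : Measure (Fin n → ℝ)) (hμ : μ ≠ 0)
    (R : (Fin n → ℝ) → ℝ)
    (hR : ∀ x : Fin n → ℝ, 0 < R x ∧
      (∀ r : ℝ, R x < r → ENNReal.ofReal (R x ^ ((n : ℝ) - p)) < μ (closedBall x r)) ∧
      (∀ r : ℝ, 0 < r → r < R x →
        μ (closedBall x r) < ENNReal.ofReal (R x ^ ((n : ℝ) - p))))
    (E : Set (Fin n → ℝ)) (hE : ∀ x : Fin n → ℝ, ∃ x' ∈ E, ‖x - x'‖ ≤ 83 * R x)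
    (c : Fin n → ℝ) (r : ℝ) (hr : 0 < r) (θ : ℝ) (hθ : 0 < θ)
    (hdist : 2 * r ≤ θ * setDist (closedBall c r) E) :
    μ (closedBall c r) ≤ ENNReal.ofReal (42 ^ p * (1 + θ) ^ p * r ^ ((n : ℝ) - p)) := by
  have hp0 : (0:ℝ) < p := lt_of_le_of_lt (Nat.cast_nonneg n) hp
  set M : ℝ := 83 * θ / 2 with hM
  have hMpos : 0 < M := by positivity
  set ρ : ℝ := r / M with hρdef
  have hρpos : 0 < ρ := by positivity
  -- every point of the cube has R x ≥ ρ
  have hRx : ∀ x ∈ closedBall c r, ρ ≤ R x := by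
    intro x hx
    obtain ⟨x', hx'E, hx'⟩ := hE x
    have hdl : setDist (closedBall c r) E ≤ dist x x' := by
      apply csInf_le
      · exact ⟨0, fun a ⟨u, _, v, _, ha⟩ => ha ▸ dist_nonneg⟩
      · exact ⟨x, hx, x', hx'E, rfl⟩
    have hxd : dist x x' ≤ 83 * R x := by rw [dist_eq_norm]; exact hx'
    have h2 : 2 * r ≤ θ * (83 * R x) :=
      le_trans hdist (mul_le_mul_of_nonneg_left (le_trans hdl hxd) hθ.le)
    rw [hρdef, div_le_iff₀ hMpos, hM]
    nlinarith
  set N : ℕ := ⌈M⌉₊ + 1 with hNdef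
  have hNnat : 0 < N := Nat.succ_pos _
  have hMN : M < (N:ℝ) := by
    have := Nat.le_ceil M
    have h2 : ((⌈M⌉₊ : ℕ) : ℝ) + 1 = (N : ℝ) := by rw [hNdef]; push_cast; ring
    linarith
  have hNpos : (0:ℝ) < N := lt_trans hMpos hMN
  have hN42 : (N:ℝ) ≤ 42 * (1 + θ) := by
    have h1 : (⌈M⌉₊ : ℝ) < M + 1 := Nat.ceil_lt_add_one hMpos.le
    have h2 : (N : ℝ) = ((⌈M⌉₊ : ℕ) : ℝ) + 1 := by rw [hNdef]; push_cast; ring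
    rw [h2, hM]; linarith
  have hrN : r / N < ρ := by
    rw [hρdef]
    exact div_lt_div_of_pos_left hr hMpos hMN
  have hrNpos : 0 < r / N := by positivity
  -- the grid of subcube centers
  set y : (Fin n → Fin N) → Fin n → ℝ :=
    fun k i => c i - r + (2 * (k i : ℕ) + 1) * r / N with hy
  have hy_mem : ∀ k, y k ∈ closedBall c r := by
    intro k
    rw [mem_closedBall, dist_pi_le_iff hr.le]
    intro i
    have hki : ((k i : ℕ) : ℝ) < N := by exact_mod_cast (k i).isLt
    have hki0 : (0:ℝ) ≤ ((k i : ℕ) : ℝ) := Nat.cast_nonneg _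
    have hki2 : ((k i : ℕ) : ℝ) + 1 ≤ N := by exact_mod_cast (k i).isLt
    simp only [hy, Real.dist_eq]
    have h1 : (0:ℝ) ≤ (2 * ((k i : ℕ):ℝ) + 1) * r / N := by positivity
    have h2 : (2 * ((k i : ℕ):ℝ) + 1) * r / N ≤ 2 * r := by
      rw [div_le_iff₀ hNpos]
      nlinarith [mul_le_mul_of_nonneg_left hki2 (by linarith : (0:ℝ) ≤ 2 * r)]
    rw [abs_le]
    constructor <;> nlinarith
  have hcover : closedBall c r ⊆ ⋃ k, closedBall (y k) (r / N) := by
    intro x hx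
    rw [mem_closedBall, dist_pi_le_iff hr.le] at hx
    have hkdef : ∀ i : Fin n,
        min ⌊(x i - (c i - r)) * N / (2 * r)⌋₊ (N - 1) < N :=
      fun i => lt_of_le_of_lt (min_le_right _ _) (Nat.sub_lt hNnat one_pos)
    refine Set.mem_iUnion.mpr ⟨fun i => ⟨_, hkdef i⟩, ?_⟩
    rw [mem_closedBall, dist_pi_le_iff hrNpos.le]
    intro i
    have hxi := hx i
    rw [Real.dist_eq, abs_le] at hxi
    have ht0 : 0 ≤ x i - (c i - r) := by linarith [hxi.1]
    have ht2 : x i - (c i - r) ≤ 2 * r := by linarith [hxi.2]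
    have hgr := grid_aux r hr N hNnat (x i - (c i - r)) ht0 ht2
    simp only [hy, Real.dist_eq, Fin.val_mk]
    convert hgr using 2
    ring
  -- per-subcube measure bound
  have hsub : ∀ k : Fin n → Fin N,
      μ (closedBall (y k) (r / N)) ≤ ENNReal.ofReal (ρ ^ ((n:ℝ) - p)) := by
    intro k
    have hRk : ρ ≤ R (y k) := hRx _ (hy_mem k)
    have h1 := (hR (y k)).2.2 (r / N) hrNpos (lt_of_lt_of_le hrN hRk)
    refine le_trans h1.le (ENNReal.ofReal_le_ofReal ?_)
    exact Real.rpow_le_rpow_of_nonpos hρpos hRk (by linarith)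
  -- sum over the grid
  have hcard : (Fintype.card (Fin n → Fin N) : ℝ) = (N:ℝ) ^ n := by
    simp [Fintype.card_fun]
  calc μ (closedBall c r)
      ≤ μ (⋃ k, closedBall (y k) (r / N)) := measure_mono hcover
    _ ≤ ∑ k : Fin n → Fin N, μ (closedBall (y k) (r / N)) :=
        measure_iUnion_fintype_le _ _
    _ ≤ ∑ _k : Fin n → Fin N, ENNReal.ofReal (ρ ^ ((n:ℝ) - p)) :=
        Finset.sum_le_sum fun k _ => hsub k
    _ = (Fintype.card (Fin n → Fin N)) • ENNReal.ofReal (ρ ^ ((n:ℝ) - p)) := by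
        rw [Finset.sum_const, Finset.card_univ]
    _ = ENNReal.ofReal ((Fintype.card (Fin n → Fin N) : ℝ) * ρ ^ ((n:ℝ) - p)) := by
        rw [nsmul_eq_mul, ← ENNReal.ofReal_natCast, ← ENNReal.ofReal_mul (Nat.cast_nonneg _)]
    _ ≤ ENNReal.ofReal (42 ^ p * (1 + θ) ^ p * r ^ ((n : ℝ) - p)) := by
        apply ENNReal.ofReal_le_ofReal
        rw [hcard]
        -- real arithmetic
        have hρ_eq : ρ ^ ((n:ℝ) - p) = r ^ ((n:ℝ) - p) * M ^ (p - (n:ℝ)) := by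
          rw [hρdef, Real.div_rpow hr.le hMpos.le, div_eq_mul_inv, ← Real.rpow_neg hMpos.le]
          ring_nf
        rw [hρ_eq]
        have h1 : M ^ (p - (n:ℝ)) ≤ (N:ℝ) ^ (p - (n:ℝ)) :=
          Real.rpow_le_rpow hMpos.le hMN.le (by linarith)
        have h2 : (N:ℝ) ^ n * (N:ℝ) ^ (p - (n:ℝ)) = (N:ℝ) ^ p := by
          rw [← Real.rpow_natCast (N:ℝ) n, ← Real.rpow_add hNpos]
          ring_nf
        have h3 : (N:ℝ) ^ p ≤ (42 * (1 + θ)) ^ p :=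
          Real.rpow_le_rpow hNpos.le hN42 hp0.le
        have h4 : (42 * (1 + θ) : ℝ) ^ p = 42 ^ p * (1 + θ) ^ p :=
          Real.mul_rpow (by norm_num) (by positivity)
        have h5 : (N:ℝ) ^ n * M ^ (p - (n:ℝ)) ≤ 42 ^ p * (1 + θ) ^ p := by
          calc (N:ℝ) ^ n * M ^ (p - (n:ℝ))
              ≤ (N:ℝ) ^ n * (N:ℝ) ^ (p - (n:ℝ)) :=
                mul_le_mul_of_nonneg_left h1 (by positivity)
            _ = (N:ℝ) ^ p := h2
            _ ≤ (42 * (1 + θ)) ^ p := h3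
            _ = 42 ^ p * (1 + θ) ^ p := h4
        have hrp : (0:ℝ) ≤ r ^ ((n:ℝ) - p) := Real.rpow_nonneg hr.le _
        nlinarith [mul_le_mul_of_nonneg_right h5 hrp]
end

section
/- Let n < p < ∞, let μ be a Borel measure on R^n, let E ⊂ R^n satisfy: μ(Q) ≤ C0 (diam Q)^{n-p} for every cube Q with diam Q ≤ dist(Q,E). Suppose L is a family of pairwise nonoverlapping cubes Q with diam Q ≤ dist(Q,E) ≤ 4 diam Q, all contained in the complement of the cube Q(A, η d) for a point A ∈ E and η, d > 0, and with dist(Q, A) ≤ γ diam Q for each Q ∈ L. Then Σ_{Q∈L} μ(Q) ≤ C(n, p, C0, γ, N) (η d)^{n-p}, provided the covering multiplicity of L is at most N. -/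
open Metric MeasureTheory

-- dyadic location lemma
lemma exists_dyadic {R t : ℝ} (hR : 0 < R) (ht : R < t) :
    ∃ k : ℕ, 2 ^ k * R < t ∧ t ≤ 2 ^ (k + 1) * R := by
  have hex : ∃ m : ℕ, t ≤ 2 ^ (m + 1) * R := by
    obtain ⟨m, hm⟩ := pow_unbounded_of_one_lt (t / R) (y := (2:ℝ)) (by norm_num)
    refine ⟨m, ?_⟩
    have : t / R < 2 ^ m := hm
    have h2 : (2:ℝ) ^ m ≤ 2 ^ (m+1) := by
      apply pow_le_pow_right₀ (by norm_num) (by omega)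
    rw [div_lt_iff₀ hR] at this
    nlinarith
  classical
  refine ⟨Nat.find hex, ?_, Nat.find_spec hex⟩
  rcases Nat.eq_zero_or_pos (Nat.find hex) with h0 | hpos
  · rw [h0]; simpa using ht
  · obtain ⟨j, hj⟩ := Nat.exists_eq_succ_of_ne_zero hpos.ne'
    have := Nat.find_min hex (m := j) (by omega)
    push_neg at this
    rw [hj]
    exact this

-- the per-annulus real identity
lemma annulus_identity (n : ℕ) (p R₀ : ℝ) (hR : 0 < R₀) (k : ℕ) :
    ((2:ℝ) ^ k * R₀) ^ (-p) * (2 * ((2:ℝ) ^ (k+1) * R₀)) ^ n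
      = (4:ℝ) ^ (n:ℝ) * R₀ ^ ((n:ℝ) - p) * ((2:ℝ) ^ ((n:ℝ) - p)) ^ k := by
  induction k with
  | zero =>
    rw [pow_zero, one_mul, pow_zero, mul_one, pow_one]
    have h4 : (2 * (2 * R₀)) = 4 * R₀ := by ring
    rw [h4, mul_pow]
    rw [← Real.rpow_natCast (4:ℝ) n, ← Real.rpow_natCast R₀ n]
    rw [show R₀ ^ (-p) * ((4:ℝ) ^ (n:ℝ) * R₀ ^ (n:ℝ)) =
      (4:ℝ) ^ (n:ℝ) * (R₀ ^ (-p) * R₀ ^ (n:ℝ)) from by ring]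
    rw [← Real.rpow_add hR]
    congr 1
    ring
  | succ k ih =>
    have h2k : (0:ℝ) < 2 ^ k := by positivity
    have e1 : ((2:ℝ) ^ (k+1) * R₀) ^ (-p) = (2:ℝ) ^ (-p) * ((2:ℝ) ^ k * R₀) ^ (-p) := by
      rw [show (2:ℝ) ^ (k+1) * R₀ = 2 * ((2:ℝ) ^ k * R₀) from by ring,
        Real.mul_rpow (by norm_num) (by positivity)]
    have e2 : (2 * ((2:ℝ) ^ (k+2) * R₀)) ^ n = (2:ℝ) ^ n * (2 * ((2:ℝ) ^ (k+1) * R₀)) ^ n := by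
      rw [show 2 * ((2:ℝ) ^ (k+2) * R₀) = 2 * (2 * ((2:ℝ) ^ (k+1) * R₀)) from by ring, mul_pow]
    have e3 : (2:ℝ) ^ (-p) * (2:ℝ) ^ (n:ℕ) = (2:ℝ) ^ ((n:ℝ) - p) := by
      rw [← Real.rpow_natCast (2:ℝ) n, ← Real.rpow_add (by norm_num : (0:ℝ) < 2)]
      congr 1
      ring
    calc ((2:ℝ) ^ (k+1) * R₀) ^ (-p) * (2 * ((2:ℝ) ^ (k+1+1) * R₀)) ^ n
        = ((2:ℝ) ^ (-p) * (2:ℝ) ^ (n:ℕ)) *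
            (((2:ℝ) ^ k * R₀) ^ (-p) * (2 * ((2:ℝ) ^ (k+1) * R₀)) ^ n) := by
          rw [e1, show k+1+1 = k+2 from rfl, e2]; ring
      _ = (4:ℝ) ^ (n:ℝ) * R₀ ^ ((n:ℝ) - p) * ((2:ℝ) ^ ((n:ℝ) - p)) ^ (k+1) := by
          rw [e3, ih, pow_succ]; ring

lemma tail_bound (n : ℕ) (p : ℝ) (hp : (n:ℝ) < p) (A : Fin n → ℝ) (R₀ : ℝ) (hR : 0 < R₀) :
    ∫⁻ x in (closedBall A R₀)ᶜ, ENNReal.ofReal (dist x A ^ (-p)) ≤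
      ENNReal.ofReal ((4:ℝ) ^ (n:ℝ) / (1 - (2:ℝ) ^ ((n:ℝ) - p)) * R₀ ^ ((n:ℝ) - p)) := by
  set m : ℝ := (n:ℝ) with hm
  set q : ℝ := (2:ℝ) ^ (m - p) with hqdef
  have hq0 : 0 < q := Real.rpow_pos_of_pos (by norm_num) _
  have hq1 : q < 1 := Real.rpow_lt_one_of_one_lt_of_neg (by norm_num) (by simp [hm]; linarith)
  set S : ℕ → Set (Fin n → ℝ) := fun k =>
    closedBall A ((2:ℝ) ^ (k+1) * R₀) \ closedBall A ((2:ℝ) ^ k * R₀) with hS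
  have cover : (closedBall A R₀)ᶜ ⊆ ⋃ k, S k := by
    intro x hx
    have hx' : R₀ < dist x A := by
      simpa [mem_closedBall, not_le] using hx
    obtain ⟨k, hk1, hk2⟩ := exists_dyadic hR hx'
    exact Set.mem_iUnion.2 ⟨k, ⟨mem_closedBall.2 hk2, fun h => absurd (mem_closedBall.1 h)
      (not_le.2 hk1)⟩⟩
  have hterm : ∀ k, ∫⁻ x in S k, ENNReal.ofReal (dist x A ^ (-p)) ≤
      ENNReal.ofReal ((4:ℝ) ^ m * R₀ ^ (m - p)) * (ENNReal.ofReal q) ^ k := by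
    intro k
    have hbase : (0:ℝ) < (2:ℝ) ^ k * R₀ := by positivity
    calc ∫⁻ x in S k, ENNReal.ofReal (dist x A ^ (-p))
        ≤ ∫⁻ _ in S k, ENNReal.ofReal (((2:ℝ) ^ k * R₀) ^ (-p)) := by
          apply setLIntegral_mono' (measurableSet_closedBall.diff measurableSet_closedBall)
          intro x hx
          apply ENNReal.ofReal_le_ofReal
          apply Real.rpow_le_rpow_of_nonpos hbase _ (by linarith [hm ▸ Nat.cast_nonneg (α := ℝ) n] : -p ≤ 0)
          exact le_of_lt (not_le.1 (fun h => hx.2 (mem_closedBall.2 h)))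
      _ = ENNReal.ofReal (((2:ℝ) ^ k * R₀) ^ (-p)) * volume (S k) := setLIntegral_const _ _
      _ ≤ ENNReal.ofReal (((2:ℝ) ^ k * R₀) ^ (-p)) *
            volume (closedBall A ((2:ℝ) ^ (k+1) * R₀)) :=
          mul_le_mul_right (measure_mono Set.diff_subset) _
      _ = ENNReal.ofReal (((2:ℝ) ^ k * R₀) ^ (-p) * (2 * ((2:ℝ) ^ (k+1) * R₀)) ^ n) := by
          rw [Real.volume_pi_closedBall _ (by positivity), Fintype.card_fin,
            ← ENNReal.ofReal_mul (by positivity)]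
      _ = ENNReal.ofReal ((4:ℝ) ^ m * R₀ ^ (m - p) * q ^ k) := by
          rw [annulus_identity n p R₀ hR k]
      _ = ENNReal.ofReal ((4:ℝ) ^ m * R₀ ^ (m - p)) * (ENNReal.ofReal q) ^ k := by
          rw [ENNReal.ofReal_mul (by positivity), ENNReal.ofReal_pow hq0.le]
  calc ∫⁻ x in (closedBall A R₀)ᶜ, ENNReal.ofReal (dist x A ^ (-p))
      ≤ ∫⁻ x in ⋃ k, S k, ENNReal.ofReal (dist x A ^ (-p)) := lintegral_mono_set cover
    _ ≤ ∑' k, ∫⁻ x in S k, ENNReal.ofReal (dist x A ^ (-p)) := lintegral_iUnion_le _ _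
    _ ≤ ∑' k : ℕ, ENNReal.ofReal ((4:ℝ) ^ m * R₀ ^ (m - p)) * (ENNReal.ofReal q) ^ k :=
        ENNReal.tsum_le_tsum hterm
    _ = ENNReal.ofReal ((4:ℝ) ^ m * R₀ ^ (m - p)) * (1 - ENNReal.ofReal q)⁻¹ := by
        rw [ENNReal.tsum_mul_left, ENNReal.tsum_geometric]
    _ = ENNReal.ofReal ((4:ℝ) ^ m / (1 - q) * R₀ ^ (m - p)) := by
        have h1 : (1:ENNReal) - ENNReal.ofReal q = ENNReal.ofReal (1 - q) := by
          rw [ENNReal.ofReal_sub _ hq0.le, ENNReal.ofReal_one]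
        rw [h1, ← ENNReal.ofReal_inv_of_pos (by linarith), ← ENNReal.ofReal_mul (by positivity)]
        congr 1
        field_simp

/-- Let `n < p < ∞` and suppose `μ(Q) ≤ C₀ (diam Q)^{n-p}` for every cube `Q` with
`diam Q ≤ dist(Q,E)`. If `L = {Q(cᵢ,rᵢ)}` is a family of pairwise nonoverlapping Whitney-type
cubes (`diam Q ≤ dist(Q,E) ≤ 4 diam Q`), all contained in the complement of `Q(A, ηd)` for a
point `A ∈ E`, with `dist(Qᵢ, A) ≤ γ diam Qᵢ` and covering multiplicity at most `N`, then
`Σᵢ μ(Qᵢ) ≤ C(n,p,C₀,γ,N) (ηd)^{n-p}` (sup-norm cubes, `diam Q(c,r) = 2r`). -/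
theorem stmt17 (n : ℕ) (p : ℝ) (hp : (n : ℝ) < p) (C₀ γ : ℝ) (hC₀ : 0 < C₀) (hγ : 0 < γ)
    (N : ℕ) :
    ∃ C : ℝ, 0 < C ∧ ∀ (μ : Measure (Fin n → ℝ)) (E : Set (Fin n → ℝ)),
      (∀ (c : Fin n → ℝ) (r : ℝ), 0 < r → 2 * r ≤ setDist (closedBall c r) E →
        μ (closedBall c r) ≤ ENNReal.ofReal (C₀ * (2 * r) ^ ((n : ℝ) - p))) →
      ∀ A ∈ E, ∀ (η d : ℝ), 0 < η → 0 < d →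
      ∀ (ι : Type) (c : ι → (Fin n → ℝ)) (r : ι → ℝ),
        (∀ i, 0 < r i) →
        (∀ i j, i ≠ j → Disjoint (ball (c i) (r i)) (ball (c j) (r j))) →
        (∀ i, 2 * r i ≤ setDist (closedBall (c i) (r i)) E ∧
          setDist (closedBall (c i) (r i)) E ≤ 4 * (2 * r i)) →
        (∀ i, closedBall (c i) (r i) ⊆ (closedBall A (η * d))ᶜ) →
        (∀ i, Metric.infDist A (closedBall (c i) (r i)) ≤ γ * (2 * r i)) →
        (∀ x : Fin n → ℝ, {i | x ∈ closedBall (c i) (r i)}.encard ≤ (N : ℕ∞)) →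
        ∑' i, μ (closedBall (c i) (r i)) ≤
          ENNReal.ofReal (C * (η * d) ^ ((n : ℝ) - p)) := by
  have hq0 : (0:ℝ) < (2:ℝ) ^ ((n:ℝ) - p) := Real.rpow_pos_of_pos (by norm_num) _
  have hq1 : (2:ℝ) ^ ((n:ℝ) - p) < 1 :=
    Real.rpow_lt_one_of_one_lt_of_neg (by norm_num) (by linarith)
  have hγ1 : (0:ℝ) < γ + 1 := by linarith
  refine ⟨C₀ * (γ + 1) ^ p * ((4:ℝ) ^ (n:ℝ) / (1 - (2:ℝ) ^ ((n:ℝ) - p))),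
    mul_pos (mul_pos hC₀ (Real.rpow_pos_of_pos hγ1 _))
      (div_pos (Real.rpow_pos_of_pos (by norm_num) _) (by linarith)), ?_⟩
  intro μ E hμ A hA η d hη hd ι c r hr hdisj hwhit hsub hγdist hN
  have hR₀ : (0:ℝ) < η * d := mul_pos hη hd
  have hcnt : Countable ι := by
    refine Pairwise.countable_of_isOpen_disjoint (s := fun i => ball (c i) (r i))
      (fun i j hij => hdisj i j hij) (fun i => isOpen_ball) (fun i => nonempty_ball.2 (hr i))
  have key : ∀ i, μ (closedBall (c i) (r i)) ≤
      ENNReal.ofReal (C₀ * (γ + 1) ^ p) *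
        ∫⁻ x in ball (c i) (r i), ENNReal.ofReal (dist x A ^ (-p)) := by
    intro i
    have hri := hr i
    have hs : (0:ℝ) < 2 * r i := by linarith
    have hdistbd : ∀ x ∈ ball (c i) (r i), dist x A ≤ (γ + 1) * (2 * r i) := by
      intro x hx
      have hx' : x ∈ closedBall (c i) (r i) := ball_subset_closedBall hx
      have h1 : dist A x ≤ Metric.infDist A (closedBall (c i) (r i)) +
          Metric.diam (closedBall (c i) (r i)) :=
        Metric.dist_le_infDist_add_diam isBounded_closedBall hx'
      have h2 : Metric.diam (closedBall (c i) (r i)) ≤ 2 * r i := diam_closedBall hri.le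
      have h3 := hγdist i
      rw [dist_comm]
      linarith
    have hlow : ENNReal.ofReal (((γ + 1) * (2 * r i)) ^ (-p) * (2 * r i) ^ n) ≤
        ∫⁻ x in ball (c i) (r i), ENNReal.ofReal (dist x A ^ (-p)) := by
      calc ENNReal.ofReal (((γ + 1) * (2 * r i)) ^ (-p) * (2 * r i) ^ n)
          = ENNReal.ofReal (((γ + 1) * (2 * r i)) ^ (-p)) * volume (ball (c i) (r i)) := by
            rw [Real.volume_pi_ball _ hri, Fintype.card_fin,
              ← ENNReal.ofReal_mul (by positivity)]
        _ = ∫⁻ _ in ball (c i) (r i), ENNReal.ofReal (((γ + 1) * (2 * r i)) ^ (-p)) :=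
            (setLIntegral_const _ _).symm
        _ ≤ ∫⁻ x in ball (c i) (r i), ENNReal.ofReal (dist x A ^ (-p)) := by
            apply setLIntegral_mono' measurableSet_ball
            intro x hx
            apply ENNReal.ofReal_le_ofReal
            have hdx : 0 < dist x A := by
              have := hsub i (ball_subset_closedBall hx)
              simp only [Set.mem_compl_iff, mem_closedBall, not_le] at this
              linarith
            exact Real.rpow_le_rpow_of_nonpos hdx (hdistbd x hx)
              (by linarith [Nat.cast_nonneg (α := ℝ) n] : -p ≤ 0)
    have hid : C₀ * (2 * r i) ^ ((n:ℝ) - p) =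
        (C₀ * (γ + 1) ^ p) * (((γ + 1) * (2 * r i)) ^ (-p) * (2 * r i) ^ n) := by
      rw [Real.mul_rpow hγ1.le hs.le, ← Real.rpow_natCast (2 * r i) n]
      have e1 : (γ + 1 : ℝ) ^ p * (γ + 1) ^ (-p) = 1 := by
        rw [← Real.rpow_add hγ1]; simp
      have e2 : (2 * r i) ^ (-p) * (2 * r i) ^ ((n:ℕ):ℝ) = (2 * r i) ^ ((n:ℝ) - p) := by
        rw [← Real.rpow_add hs]; congr 1; ring
      calc C₀ * (2 * r i) ^ ((n:ℝ) - p)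
          = C₀ * ((γ + 1 : ℝ) ^ p * (γ + 1) ^ (-p)) *
              ((2 * r i) ^ (-p) * (2 * r i) ^ ((n:ℕ):ℝ)) := by rw [e1, e2]; ring
        _ = (C₀ * (γ + 1) ^ p) * ((γ + 1) ^ (-p) * (2 * r i) ^ (-p) *
              (2 * r i) ^ ((n:ℕ):ℝ)) := by ring
    calc μ (closedBall (c i) (r i))
        ≤ ENNReal.ofReal (C₀ * (2 * r i) ^ ((n:ℝ) - p)) := hμ _ _ hri (hwhit i).1
      _ = ENNReal.ofReal (C₀ * (γ + 1) ^ p) *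
            ENNReal.ofReal (((γ + 1) * (2 * r i)) ^ (-p) * (2 * r i) ^ n) := by
          rw [← ENNReal.ofReal_mul (by positivity), hid]
      _ ≤ _ := mul_le_mul_right hlow _
  calc ∑' i, μ (closedBall (c i) (r i))
      ≤ ∑' i, ENNReal.ofReal (C₀ * (γ + 1) ^ p) *
          ∫⁻ x in ball (c i) (r i), ENNReal.ofReal (dist x A ^ (-p)) :=
        ENNReal.tsum_le_tsum key
    _ = ENNReal.ofReal (C₀ * (γ + 1) ^ p) *
          ∑' i, ∫⁻ x in ball (c i) (r i), ENNReal.ofReal (dist x A ^ (-p)) :=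
        ENNReal.tsum_mul_left
    _ = ENNReal.ofReal (C₀ * (γ + 1) ^ p) *
          ∫⁻ x in ⋃ i, ball (c i) (r i), ENNReal.ofReal (dist x A ^ (-p)) := by
        rw [lintegral_iUnion (fun i => measurableSet_ball) (fun i j hij => hdisj i j hij)]
    _ ≤ ENNReal.ofReal (C₀ * (γ + 1) ^ p) *
          ∫⁻ x in (closedBall A (η * d))ᶜ, ENNReal.ofReal (dist x A ^ (-p)) :=
        mul_le_mul_right (lintegral_mono_set (Set.iUnion_subset fun i =>
          (ball_subset_closedBall.trans (hsub i)))) _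
    _ ≤ ENNReal.ofReal (C₀ * (γ + 1) ^ p) *
          ENNReal.ofReal ((4:ℝ) ^ (n:ℝ) / (1 - (2:ℝ) ^ ((n:ℝ) - p)) * (η * d) ^ ((n:ℝ) - p)) :=
        mul_le_mul_right (tail_bound n p hp A (η * d) hR₀) _
    _ = ENNReal.ofReal (C₀ * (γ + 1) ^ p * ((4:ℝ) ^ (n:ℝ) / (1 - (2:ℝ) ^ ((n:ℝ) - p))) *
          (η * d) ^ ((n:ℝ) - p)) := by
        rw [← ENNReal.ofReal_mul (by positivity)]
        congr 1
        ring
end
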